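/- Let n ≥ 1, let T be an n-dimensional simplex in ℝ^n, and let Λ be a full-rank lattice in ℝ^n such that T + Λ = ℝ^n. If the star number α(T,Λ) (the number of u ∈ Λ \ {0} with T ∩ (T+u) ≠ ∅) satisfies α(T,Λ) ≥ 2^{3n+1}, then the covering density satisfies vol(T)/det(Λ) ≥ 2. -/

import Mathlib

/-!
Every nonzero lattice vector `u` in the star of the covering lies in `T - T`, so the star set `S`
satisfies `S + T ⊆ T - T + T`. Since `T + Λ` covers space, for every point `x` of a fundamental
domain at least `#S` lattice translates of `x` lie in `S + T`; integrating this count over the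
fundamental domain gives `#S · det Λ ≤ vol (S + T)`. On the other hand `T` is an affine image of
the corner simplex `Δ = {x ≥ 0, ∑ xᵢ ≤ 1}`, and `Δ - Δ + Δ` lies in the `ℓ¹`-ball of radius `3`,
which is covered by `2ⁿ` sign-flipped copies of `3Δ`; hence `vol (T - T + T) ≤ 6ⁿ vol T`.
Altogether `2 · 8ⁿ · det Λ ≤ #S · det Λ ≤ 6ⁿ vol T`, and `6ⁿ ≤ 8ⁿ`.
-/

open Pointwise MeasureTheory Set Submodule
open scoped ENNReal

theorem MeasureTheory.IsAddFundamentalDomain.card_mul_measure_le_measure_vadd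
    {G α : Type*} [AddGroup G] [Countable G] [AddAction G α] [MeasurableSpace α]
    [MeasurableConstVAdd G α] {μ : Measure α} [VAddInvariantMeasure G α μ] {D : Set α}
    (hD : IsAddFundamentalDomain G D μ) {T : Set α} (hT : MeasurableSet T)
    (hcov : ∀ x, ∃ g : G, g +ᵥ x ∈ T) (S : Finset G) :
    S.card * μ D ≤ μ ((S : Set G) +ᵥ T) := by
  have hA : MeasurableSet ((S : Set G) +ᵥ T) := by
    rw [← iUnion_vadd_set]
    exact S.measurableSet_biUnion fun s _ => hT.const_vadd s
  set A := (S : Set G) +ᵥ T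
  have hcount : ∀ x, (S.card : ℝ≥0∞) ≤ ∑' g : G, A.indicator 1 (g +ᵥ x) := by
    intro x
    obtain ⟨g₀, hg₀⟩ := hcov x
    calc (S.card : ℝ≥0∞) = ∑ s ∈ S, A.indicator 1 ((s + g₀) +ᵥ x) := by
          rw [Finset.card_eq_sum_ones, Nat.cast_sum]
          refine Finset.sum_congr rfl fun s hs => ?_
          rw [add_vadd, indicator_of_mem (vadd_mem_vadd hs hg₀), Pi.one_apply, Nat.cast_one]
      _ ≤ ∑' g : G, A.indicator 1 ((g + g₀) +ᵥ x) := ENNReal.sum_le_tsum S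
      _ = ∑' g : G, A.indicator 1 (g +ᵥ x) :=
          (Equiv.addRight g₀).tsum_eq fun g => A.indicator 1 (g +ᵥ x)
  calc S.card * μ D = ∫⁻ x in D, (S.card : ℝ≥0∞) ∂μ := by rw [setLIntegral_const, mul_comm]
    _ ≤ ∫⁻ x in D, ∑' g : G, A.indicator 1 (g +ᵥ x) ∂μ := lintegral_mono hcount
    _ = ∑' g : G, ∫⁻ x in D, A.indicator 1 (g +ᵥ x) ∂μ :=
        lintegral_tsum fun g =>
          ((measurable_one.indicator hA).comp (measurable_const_vadd g)).aemeasurable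
    _ = μ A := by rw [← hD.lintegral_eq_tsum'', lintegral_indicator_one hA]

namespace ZSpan

theorem ncard_mul_measure_fundamentalDomain_le {ι E : Type*} [Finite ι]
    [NormedAddCommGroup E] [NormedSpace ℝ E] [MeasurableSpace E] [BorelSpace E]
    (b : Module.Basis ι ℝ E) (μ : Measure E) [μ.IsAddLeftInvariant] {T : Set E}
    (hT : MeasurableSet T) (hcov : T + (span ℤ (range b) : Set E) = univ) {S : Set E}
    (hS : S ⊆ span ℤ (range b)) (hSfin : S.Finite) :
    S.ncard * μ (fundamentalDomain b) ≤ μ (S + T) := by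
  set Λ := (span ℤ (range b)).toAddSubgroup
  have : Countable Λ := inferInstanceAs (Countable (span ℤ (range b)))
  have hS' : ((↑) ⁻¹' S : Set Λ).Finite := hSfin.preimage Subtype.val_injective.injOn
  have hcard : S.ncard = hS'.toFinset.card := by
    rw [← Set.ncard_eq_toFinset_card _ hS',
      ncard_preimage_of_injective_subset_range Subtype.val_injective (by simpa [Λ] using hS)]
  have hcov' : ∀ x, ∃ g : Λ, g +ᵥ x ∈ T := by
    intro x
    obtain ⟨t, ht, l, hl, rfl⟩ := (Set.eq_univ_iff_forall.mp hcov) x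
    refine ⟨-⟨l, hl⟩, ?_⟩
    convert ht using 1
    show -l + (t + l) = t
    abel
  have hsub : ((hS'.toFinset : Set Λ) +ᵥ T) ⊆ S + T := by
    rintro _ ⟨g, hg, t, ht, rfl⟩
    exact add_mem_add (by simpa using hg) ht
  rw [hcard]
  exact ((ZSpan.isAddFundamentalDomain' b μ).card_mul_measure_le_measure_vadd hT hcov' _).trans
    (measure_mono hsub)

theorem volume_fundamentalDomain_euclideanSpace {ι : Type*} [Fintype ι] [DecidableEq ι]
    (b : Module.Basis ι ℝ (EuclideanSpace ℝ ι)) :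
    volume (fundamentalDomain b) = ENNReal.ofReal |(Matrix.of fun i j => b i j).det| := by
  let e := EuclideanSpace.basisFun ι ℝ
  have he : volume (fundamentalDomain e.toBasis) = 1 := by
    rw [measure_congr (fundamentalDomain_ae_parallelepiped _ _), OrthonormalBasis.coe_toBasis,
      e.volume_parallelepiped]
  rw [measure_fundamentalDomain b volume e.toBasis, he, mul_one, Module.Basis.det_apply,
    ← Matrix.det_transpose]
  rfl

end ZSpan

theorem add_subset_sub_add_of_inter_nonempty {E : Type*} [AddCommGroup E] {S T : Set E}
    (hS : ∀ u ∈ S, (T ∩ (T + {u})).Nonempty) : S + T ⊆ T - T + T := by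
  rintro _ ⟨u, hu, t', ht', rfl⟩
  obtain ⟨x, hxT, hxu⟩ := hS u hu
  rw [add_singleton] at hxu
  obtain ⟨t, ht, rfl⟩ := hxu
  exact add_mem_add ⟨t + u, hxT, t, ht, add_sub_cancel_left t u⟩ ht'

section CornerSimplex

variable {ι : Type*} [Fintype ι]

def cornerSimplex (ι : Type*) [Fintype ι] (r : ℝ) : Set (EuclideanSpace ℝ ι) :=
  {x | (∀ i, 0 ≤ x i) ∧ ∑ i, x i ≤ r}

theorem convex_cornerSimplex (r : ℝ) : Convex ℝ (cornerSimplex ι r) := by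
  rintro x ⟨hx₀, hx₁⟩ y ⟨hy₀, hy₁⟩ a b ha hb hab
  refine ⟨fun i => ?_, ?_⟩
  · simpa using add_nonneg (mul_nonneg ha (hx₀ i)) (mul_nonneg hb (hy₀ i))
  · simp only [PiLp.add_apply, PiLp.smul_apply, smul_eq_mul, Finset.sum_add_distrib,
      ← Finset.mul_sum]
    calc a * ∑ i, x i + b * ∑ i, y i ≤ a * r + b * r := by gcongr
      _ = r := by rw [← add_mul, hab, one_mul]

theorem cornerSimplex_eq_smul {r : ℝ} (hr : 0 < r) :
    cornerSimplex ι r = r • cornerSimplex ι 1 := by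
  ext x
  simp [mem_smul_set_iff_inv_smul_mem₀ hr.ne', cornerSimplex, ← Finset.mul_sum,
    inv_mul_le_iff₀ hr, inv_pos.2 hr]

theorem volume_cornerSimplex {r : ℝ} (hr : 0 < r) :
    volume (cornerSimplex ι r)
      = ENNReal.ofReal r ^ Fintype.card ι * volume (cornerSimplex ι 1) := by
  rw [cornerSimplex_eq_smul hr, Measure.addHaar_smul_of_nonneg _ hr.le, finrank_euclideanSpace,
    ENNReal.ofReal_pow hr.le]

theorem cornerSimplex_sub_add_subset (r s t : ℝ) :
    cornerSimplex ι r - cornerSimplex ι s + cornerSimplex ι t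
      ⊆ {y | ∑ i, |y i| ≤ r + s + t} := by
  rintro _ ⟨_, ⟨x, ⟨hx₀, hx₁⟩, y, ⟨hy₀, hy₁⟩, rfl⟩, z, ⟨hz₀, hz₁⟩, rfl⟩
  calc ∑ i, |(x - y + z) i| ≤ ∑ i, (x i + y i + z i) := by
        refine Finset.sum_le_sum fun i _ => abs_le.2 ⟨?_, ?_⟩ <;>
          simp only [PiLp.add_apply, PiLp.sub_apply] <;> linarith [hx₀ i, hy₀ i, hz₀ i]
    _ ≤ r + s + t := by
        simp only [Finset.sum_add_distrib]
        linarith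

open Classical in
noncomputable def signFlip (J : Set ι) : EuclideanSpace ℝ ι ≃ₗᵢ[ℝ] EuclideanSpace ℝ ι :=
  LinearIsometryEquiv.piLpCongrRight 2 fun i =>
    if i ∈ J then LinearIsometryEquiv.neg ℝ else LinearIsometryEquiv.refl ℝ ℝ

open Classical in
theorem signFlip_apply (J : Set ι) (x : EuclideanSpace ℝ ι) (i : ι) :
    signFlip J x i = if i ∈ J then -x i else x i := by
  by_cases h : i ∈ J <;> simp [signFlip, h]

theorem volume_l1Ball_le (r : ℝ) :
    volume {y : EuclideanSpace ℝ ι | ∑ i, |y i| ≤ r}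
      ≤ 2 ^ Fintype.card ι * volume (cornerSimplex ι r) := by
  classical
  have hcover : {y : EuclideanSpace ℝ ι | ∑ i, |y i| ≤ r}
      ⊆ ⋃ J : Set ι, signFlip J ⁻¹' cornerSimplex ι r := by
    intro y hy
    have habs : ∀ i, signFlip {i | y i < 0} y i = |y i| := fun i => by
      by_cases h : y i < 0 <;> simp [signFlip_apply, h, abs_of_neg, abs_of_nonneg, not_lt.1]
    exact mem_iUnion.2 ⟨{i | y i < 0}, fun i => habs i ▸ abs_nonneg _, by simpa [habs] using hy⟩
  calc volume {y : EuclideanSpace ℝ ι | ∑ i, |y i| ≤ r}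
      ≤ ∑ J : Set ι, volume (signFlip J ⁻¹' cornerSimplex ι r) :=
        (measure_mono hcover).trans (measure_iUnion_fintype_le _ _)
    _ = ∑ _J : Set ι, volume (cornerSimplex ι r) := by
        congr! 1 with J
        exact (signFlip J).measurePreserving.measure_preimage_equiv
          (f := (signFlip J).toMeasurableEquiv) _
    _ = 2 ^ Fintype.card ι * volume (cornerSimplex ι r) := by
        simp [Fintype.card_set]

theorem volume_cornerSimplex_sub_add_le :
    volume (cornerSimplex ι 1 - cornerSimplex ι 1 + cornerSimplex ι 1)
      ≤ 6 ^ Fintype.card ι * volume (cornerSimplex ι 1) :=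
  calc volume (cornerSimplex ι 1 - cornerSimplex ι 1 + cornerSimplex ι 1)
      ≤ volume {y : EuclideanSpace ℝ ι | ∑ i, |y i| ≤ 3} :=
        measure_mono ((cornerSimplex_sub_add_subset 1 1 1).trans fun y hy => by
          norm_num at hy ⊢; linarith)
    _ ≤ 2 ^ Fintype.card ι * volume (cornerSimplex ι 3) := volume_l1Ball_le 3
    _ = 6 ^ Fintype.card ι * volume (cornerSimplex ι 1) := by
        rw [volume_cornerSimplex three_pos, ← mul_assoc, ← mul_pow]
        norm_num

end CornerSimplex

section Simplex

variable {E : Type*} [AddCommGroup E] [Module ℝ E] {n : ℕ}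

noncomputable def simplexEdgeMap (p : Fin (n + 1) → E) : EuclideanSpace ℝ (Fin n) →ₗ[ℝ] E :=
  Fintype.linearCombination ℝ (fun i => p i.succ - p 0) ∘ₗ
    (WithLp.linearEquiv 2 ℝ (Fin n → ℝ)).toLinearMap

theorem simplexEdgeMap_apply (p : Fin (n + 1) → E) (x : EuclideanSpace ℝ (Fin n)) :
    simplexEdgeMap p x = ∑ i, x i • (p i.succ - p 0) := by
  simp [simplexEdgeMap, Fintype.linearCombination_apply]

theorem convexHull_range_eq_vadd_image_cornerSimplex (p : Fin (n + 1) → E) :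
    convexHull ℝ (range p) = p 0 +ᵥ simplexEdgeMap p '' cornerSimplex (Fin n) 1 := by
  refine (convexHull_min ?_ (((convex_cornerSimplex 1).linear_image _).vadd _)).antisymm ?_
  · rintro _ ⟨j, rfl⟩
    refine mem_vadd_set.2 (Fin.cases ⟨0, ⟨0, ⟨fun _ => le_rfl, by simp⟩, map_zero _⟩, by simp⟩
      (fun i => ⟨_, ⟨EuclideanSpace.single i 1, ⟨fun k => ?_, ?_⟩, rfl⟩, ?_⟩) j)
    · rw [PiLp.single_apply]; split_ifs <;> norm_num
    · simp
    · simp [simplexEdgeMap_apply]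
  · rintro _ ⟨_, ⟨x, ⟨hx₀, hx₁⟩, rfl⟩, rfl⟩
    refine mem_convexHull_of_exists_fintype (Fin.cons (1 - ∑ i, x i) fun i => x i) p
      (fun j => Fin.cases (by simpa using hx₁) (fun i => by simpa using hx₀ i) j)
      (by simp [Fin.sum_cons]) (fun j => mem_range_self j) ?_
    simp only [Fin.sum_univ_succ, Fin.cons_zero, Fin.cons_succ, simplexEdgeMap_apply, vadd_eq_add,
      smul_sub, Finset.sum_sub_distrib, ← Finset.sum_smul, sub_smul, one_smul]
    abel

theorem volume_convexHull_sub_add_le (p : Fin (n + 1) → EuclideanSpace ℝ (Fin n)) :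
    volume (convexHull ℝ (range p) - convexHull ℝ (range p) + convexHull ℝ (range p))
      ≤ 6 ^ n * volume (convexHull ℝ (range p)) := by
  set L := simplexEdgeMap p
  have hvol : ∀ A, volume (p 0 +ᵥ L '' A) = ENNReal.ofReal |LinearMap.det L| * volume A :=
    fun A => by rw [measure_vadd, Measure.addHaar_image_linearMap]
  rw [convexHull_range_eq_vadd_image_cornerSimplex, vadd_sub_vadd_comm, sub_self, zero_vadd,
    add_vadd_comm, ← image_sub, ← image_add, hvol, hvol, mul_left_comm]
  gcongr
  simpa using volume_cornerSimplex_sub_add_le (ι := Fin n)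

end Simplex

theorem simplex_covering_large_star_number_general (n : ℕ)
    (p : Fin (n + 1) → EuclideanSpace ℝ (Fin n))
    (T : Set (EuclideanSpace ℝ (Fin n))) (hT : T = convexHull ℝ (Set.range p))
    (b : Module.Basis (Fin n) ℝ (EuclideanSpace ℝ (Fin n)))
    (hcov : T + (↑(Submodule.span ℤ (Set.range b)) : Set (EuclideanSpace ℝ (Fin n)))
      = Set.univ)
    (hstar : 2 ^ (3 * n + 1) ≤
      {u : EuclideanSpace ℝ (Fin n) | u ∈ Submodule.span ℤ (Set.range b) ∧ u ≠ 0 ∧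
        (T ∩ (T + {u})).Nonempty}.ncard) :
    ENNReal.ofReal (2 * |(Matrix.of fun i j => b i j).det|) ≤ volume T := by
  set S := {u : EuclideanSpace ℝ (Fin n) | u ∈ Submodule.span ℤ (Set.range b) ∧ u ≠ 0 ∧
    (T ∩ (T + {u})).Nonempty}
  set d := ENNReal.ofReal |(Matrix.of fun i j => b i j).det|
  have hSfin : S.Finite := finite_of_ncard_pos (lt_of_lt_of_le (by positivity) hstar)
  have hTm : MeasurableSet T :=
    hT ▸ ((finite_range p).isCompact_convexHull (𝕜 := ℝ)).isClosed.measurableSet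
  have hbound : 8 ^ n * (2 * d) ≤ 6 ^ n * volume T :=
    calc 8 ^ n * (2 * d) = 2 ^ (3 * n + 1) * d := by
          rw [pow_succ, pow_mul]; norm_num; ring
      _ ≤ S.ncard * volume (ZSpan.fundamentalDomain b) := by
          rw [ZSpan.volume_fundamentalDomain_euclideanSpace]
          gcongr
          exact_mod_cast hstar
      _ ≤ volume (S + T) :=
          ZSpan.ncard_mul_measure_fundamentalDomain_le b volume hTm hcov (fun u hu => hu.1) hSfin
      _ ≤ volume (T - T + T) :=
          measure_mono (add_subset_sub_add_of_inter_nonempty fun u hu => hu.2.2)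
      _ ≤ 6 ^ n * volume T := hT ▸ volume_convexHull_sub_add_le p
  have hcancel : 6 ^ n * (2 * d) ≤ 6 ^ n * volume T :=
    le_trans (by gcongr; norm_num) hbound
  rw [ENNReal.ofReal_mul zero_le_two, ENNReal.ofReal_ofNat]
  exact (ENNReal.mul_le_mul_iff_right (by positivity) (by finiteness)).mp hcancel

/-- If a lattice covering of `ℝ^n` by an `n`-dimensional simplex `T` has star number at
least `2^{3n+1}`, then its density is at least `2`, i.e. `vol(T) ≥ 2·det(Λ)`. -/
theorem simplex_covering_large_star_number (n : ℕ) (hn : 1 ≤ n)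
    (p : Fin (n + 1) → EuclideanSpace ℝ (Fin n)) (hp : AffineIndependent ℝ p)
    (T : Set (EuclideanSpace ℝ (Fin n))) (hT : T = convexHull ℝ (Set.range p))
    (b : Module.Basis (Fin n) ℝ (EuclideanSpace ℝ (Fin n)))
    (hcov : T + (↑(Submodule.span ℤ (Set.range b)) : Set (EuclideanSpace ℝ (Fin n)))
      = Set.univ)
    (hstar : 2 ^ (3 * n + 1) ≤
      {u : EuclideanSpace ℝ (Fin n) | u ∈ Submodule.span ℤ (Set.range b) ∧ u ≠ 0 ∧
        (T ∩ (T + {u})).Nonempty}.ncard) :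
    ENNReal.ofReal (2 * |(Matrix.of fun i j => b i j).det|) ≤ volume T :=
  simplex_covering_large_star_number_general n p T hT b hcov hstar
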